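/- arXiv:2209.06129 — 2 statements merged into one kernel-verified Lean document; each statement's English description precedes it below -/
import Mathlib

section
/- Let μ_a, μ̃_k be real numbers (expected item and key-term rewards), let μ̂_a, μ̂_k be real numbers (their empirical means), let ρ_a, ρ̃_k ≥ 0 (their confidence radii), and let γ > 1. Suppose μ̂_a ≤ μ_a + ρ_a and μ̂_k ≥ μ̃_k − ρ̃_k. If the switching condition μ̂_a − γ·ρ_a ≥ μ̂_k + γ·ρ̃_k holds, then ρ_a + ρ̃_k ≤ (μ_a − μ̃_k) / (γ − 1). -/
/-- If the switching condition `μ̂_a − γρ_a ≥ μ̂_k + γρ̃_k` holds with `γ > 1`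
and the empirical means lie within their confidence radii, then
`ρ_a + ρ̃_k ≤ (μ_a − μ̃_k)/(γ − 1)`. -/
theorem stmt3 (μa μk μha μhk ρa ρk γ : ℝ)
    (hρa : 0 ≤ ρa) (hρk : 0 ≤ ρk) (hγ : 1 < γ)
    (h1 : μha ≤ μa + ρa) (h2 : μk - ρk ≤ μhk)
    (hswitch : μhk + γ * ρk ≤ μha - γ * ρa) :
    ρa + ρk ≤ (μa - μk) / (γ - 1) := by
  rw [le_div_iff₀ (by linarith : (0:ℝ) < γ - 1)]
  nlinarith
end

section
/- Let t > 1, Δ > 0, γ ≥ 0, S ≥ 0, and T_a, T̃ > 0 be real numbers. Suppose T_a ≥ T̃ − S and √(3·ln t/(2·T_a)) + √(3·ln t/(2·T̃)) > Δ/(γ + 1). Then T̃ ≤ 6·(γ+1)²·ln t / Δ² + S. -/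
/-- Deterministic core of Lemma 1: if `T_a ≥ T̃ − S` and the failed switching
condition gives `√(3 ln t/(2T_a)) + √(3 ln t/(2T̃)) > Δ/(γ+1)`, then
`T̃ ≤ 6(γ+1)² ln t / Δ² + S`. -/
theorem stmt9 (t Δ γ S Ta T : ℝ) (ht : 1 < t) (hΔ : 0 < Δ) (hγ : 0 ≤ γ)
    (hS : 0 ≤ S) (hTa : 0 < Ta) (hT : 0 < T)
    (h1 : T - S ≤ Ta)
    (h2 : Δ / (γ + 1) < Real.sqrt (3 * Real.log t / (2 * Ta)) +
      Real.sqrt (3 * Real.log t / (2 * T))) :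
    T ≤ 6 * (γ + 1) ^ 2 * Real.log t / Δ ^ 2 + S := by
  have hL : 0 < Real.log t := Real.log_pos ht
  rcases le_or_gt T S with h | h
  · have h0 : (0:ℝ) ≤ 6 * (γ + 1) ^ 2 * Real.log t / Δ ^ 2 := by positivity
    linarith
  · set u := T - S with hu
    have hu0 : 0 < u := by simp only [hu]; linarith
    have hA : Real.sqrt (3 * Real.log t / (2 * Ta)) ≤ Real.sqrt (3 * Real.log t / (2 * u)) :=
      Real.sqrt_le_sqrt (div_le_div_of_nonneg_left (by positivity) (by linarith) (by linarith))
    have hB : Real.sqrt (3 * Real.log t / (2 * T)) ≤ Real.sqrt (3 * Real.log t / (2 * u)) :=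
      Real.sqrt_le_sqrt (div_le_div_of_nonneg_left (by positivity) (by linarith) (by linarith))
    set a := Real.sqrt (3 * Real.log t / (2 * u)) with ha
    have ha0 : 0 ≤ a := Real.sqrt_nonneg _
    have ha2 : a ^ 2 = 3 * Real.log t / (2 * u) := Real.sq_sqrt (by positivity)
    have ha2' : a ^ 2 * (2 * u) = 3 * Real.log t := by
      rw [ha2]; field_simp
    have h2' : Δ / (γ + 1) < 2 * a := by linarith
    have hΔlt : Δ < 2 * a * (γ + 1) := by
      have := (div_lt_iff₀ (by linarith : (0:ℝ) < γ + 1)).mp h2'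
      linarith
    have hsq : Δ ^ 2 < (2 * a * (γ + 1)) ^ 2 := by nlinarith
    have hkey : u * Δ ^ 2 < 6 * (γ + 1) ^ 2 * Real.log t := by nlinarith
    have : u ≤ 6 * (γ + 1) ^ 2 * Real.log t / Δ ^ 2 := by
      rw [le_div_iff₀ (by positivity)]; linarith
    linarith
end
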